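/- For $s \le t$ and $n \ge 1$, the hypercube $[s,t]^n$ equals the union over all permutations $\rho \in \Sigma_n$ of the permuted simplexes $\Delta_{s,t}^n\rho$. Consequently, for any integrable function $f : [s,t]^n \to \mathbb{R}$, $\sum_{\rho \in \Sigma_n} \int_{\Delta_{s,t}^n\rho} f = \int_{[s,t]^n} f$. -/

import Mathlib

/-!
Sorting the coordinates of a point of `[s,t]^n` by `Tuple.sort` puts it in the simplex permuted by
the sorting permutation, so the permuted simplexes cover the cube. Two distinct permuted simplexes
can only share points with two equal coordinates, since a monotone rearrangement of a tuple is
unique; such points lie in finitely many hyperplanes, so the simplexes are almost everywhere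
disjoint and the integral over the cube splits as the sum of the integrals.
-/

open MeasureTheory

/-- The simplex `Δ_{s,t}^n`. -/
def simplex (s t : ℝ) (n : ℕ) : Set (Fin n → ℝ) :=
  {r | (∀ i, s ≤ r i ∧ r i ≤ t) ∧ ∀ i j : Fin n, i ≤ j → r i ≤ r j}

/-- The permuted simplex `Δ_{s,t}^n ρ = {r : s ≤ r (ρ 0) ≤ ⋯ ≤ r (ρ (n-1)) ≤ t}`. -/
def permSimplex (s t : ℝ) (n : ℕ) (ρ : Equiv.Perm (Fin n)) : Set (Fin n → ℝ) :=
  {r | (fun i => r (ρ i)) ∈ simplex s t n}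

lemma permSimplex_subset_pi (s t : ℝ) (n : ℕ) (ρ : Equiv.Perm (Fin n)) :
    permSimplex s t n ρ ⊆ Set.univ.pi fun _ : Fin n => Set.Icc s t := by
  intro r hr i _
  simpa using hr.1 (ρ.symm i)

lemma pi_Icc_eq_iUnion_permSimplex (s t : ℝ) (n : ℕ) :
    (Set.univ.pi fun _ : Fin n => Set.Icc s t) = ⋃ ρ, permSimplex s t n ρ := by
  refine (Set.iUnion_subset (permSimplex_subset_pi s t n)).antisymm' fun r hr => ?_
  exact Set.mem_iUnion.2
    ⟨Tuple.sort r, fun i => hr (Tuple.sort r i) trivial, fun _ _ hij => Tuple.monotone_sort r hij⟩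

lemma isClosed_simplex (s t : ℝ) (n : ℕ) : IsClosed (simplex s t n) := by
  have : simplex s t n = (⋂ i, {r | s ≤ r i} ∩ {r | r i ≤ t}) ∩
      ⋂ (i) (j) (_ : i ≤ j), {r : Fin n → ℝ | r i ≤ r j} := by
    ext r
    simp only [simplex, Set.mem_ofPred_eq, Set.mem_inter_iff, Set.mem_iInter]
  rw [this]
  refine .inter (isClosed_iInter fun i => .inter ?_ ?_)
    (isClosed_iInter fun i => isClosed_iInter fun j => isClosed_iInter fun _ => ?_)
  · exact isClosed_le continuous_const (continuous_apply i)
  · exact isClosed_le (continuous_apply i) continuous_const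
  · exact isClosed_le (continuous_apply i) (continuous_apply j)

lemma isClosed_permSimplex (s t : ℝ) (n : ℕ) (ρ : Equiv.Perm (Fin n)) :
    IsClosed (permSimplex s t n ρ) :=
  (isClosed_simplex s t n).preimage (by fun_prop)

lemma MeasureTheory.Measure.addHaar_setOf_apply_eq_apply {ι : Type*} [Fintype ι] (μ : Measure (ι → ℝ))
    [μ.IsAddHaarMeasure] {a b : ι} (hab : a ≠ b) : μ {r | r a = r b} = 0 := by
  have hker : {r : ι → ℝ | r a = r b} =
      (LinearMap.ker ((LinearMap.proj a : (ι → ℝ) →ₗ[ℝ] ℝ) - LinearMap.proj b) : Set _) := by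
    ext r
    simp [sub_eq_zero]
  rw [hker]
  refine Measure.addHaar_submodule μ _ fun htop => ?_
  classical
  have : Pi.single a (1 : ℝ) ∈ LinearMap.ker _ := htop ▸ Submodule.mem_top
  simp [hab.symm] at this

lemma exists_apply_eq_of_mem_permSimplex_inter {s t : ℝ} {n : ℕ} {ρ σ : Equiv.Perm (Fin n)}
    (hρσ : ρ ≠ σ) {r : Fin n → ℝ} (hρ : r ∈ permSimplex s t n ρ) (hσ : r ∈ permSimplex s t n σ) :
    ∃ k, ρ k ≠ σ k ∧ r (ρ k) = r (σ k) := by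
  have hsorted : r ∘ ρ = r ∘ σ :=
    Tuple.unique_monotone (fun i j h => hρ.2 i j h) (fun i j h => hσ.2 i j h)
  obtain ⟨k, hk⟩ : ∃ k, ρ k ≠ σ k := by
    by_contra! h
    exact hρσ (Equiv.ext h)
  exact ⟨k, hk, congrFun hsorted k⟩

lemma pairwise_aedisjoint_permSimplex (s t : ℝ) (n : ℕ) :
    Pairwise (Function.onFun (AEDisjoint volume) (permSimplex s t n)) := by
  intro ρ σ hρσ
  have hsub : permSimplex s t n ρ ∩ permSimplex s t n σ ⊆
      ⋃ (p : Fin n × Fin n) (_ : p.1 ≠ p.2), {r | r p.1 = r p.2} := by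
    rintro r ⟨hρ, hσ⟩
    obtain ⟨k, hk, hr⟩ := exists_apply_eq_of_mem_permSimplex_inter hρσ hρ hσ
    exact Set.mem_biUnion (x := (ρ k, σ k)) hk hr
  exact measure_mono_null hsub <| measure_iUnion_null fun _ => measure_iUnion_null fun hp =>
    Measure.addHaar_setOf_apply_eq_apply volume hp

theorem stmt2_general (s t : ℝ) (n : ℕ) (f : (Fin n → ℝ) → ℝ)
    (hf : IntegrableOn f (Set.univ.pi fun _ : Fin n => Set.Icc s t)) :
    ((Set.univ.pi fun _ : Fin n => Set.Icc s t) =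
      ⋃ ρ : Equiv.Perm (Fin n), permSimplex s t n ρ) ∧
    (∑ ρ : Equiv.Perm (Fin n), ∫ r in permSimplex s t n ρ, f r =
      ∫ r in Set.univ.pi fun _ : Fin n => Set.Icc s t, f r) := by
  have hcover := pi_Icc_eq_iUnion_permSimplex s t n
  refine ⟨hcover, ?_⟩
  rw [hcover] at hf ⊢
  rw [integral_iUnion_ae (fun ρ => (isClosed_permSimplex s t n ρ).measurableSet.nullMeasurableSet)
    (pairwise_aedisjoint_permSimplex s t n) hf, tsum_fintype]

/-- the hypercube `[s,t]^n` is the union of all permuted simplexes, and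
for any integrable `f`, the sum of the integrals of `f` over the permuted simplexes
equals the integral of `f` over the hypercube. -/
theorem stmt2 (s t : ℝ) (hst : s ≤ t) (n : ℕ) (hn : 1 ≤ n) (f : (Fin n → ℝ) → ℝ)
    (hf : IntegrableOn f (Set.univ.pi fun _ : Fin n => Set.Icc s t)) :
    ((Set.univ.pi fun _ : Fin n => Set.Icc s t) =
      ⋃ ρ : Equiv.Perm (Fin n), permSimplex s t n ρ) ∧
    (∑ ρ : Equiv.Perm (Fin n), ∫ r in permSimplex s t n ρ, f r =
      ∫ r in Set.univ.pi fun _ : Fin n => Set.Icc s t, f r) :=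
  stmt2_general s t n f hf
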